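/- (Limit of the denominator scale integral, equation (4.11).) For every z > 0 one has lim_{ε→0⁺} ∫_ε^z exp( ∫_y^z (ε·b₁(l) − b₂(l))/σ(l)² dl ) dy = ∫_0^z exp( −∫_y^z b₂(l)/σ(l)² dl ) dy, and the right-hand side integral is finite and positive. -/

import Mathlib

/-!
Since `σ 0 = 0` and `σ'(0) > 0`, there is `c > 0` with `σ l ≥ c l` on `(0, z]`. Hence for
`ε < y ≤ z` the inner exponent is at most `ε · sup b₁ · ∫_y^z dl / (c l)² ≤ sup b₁ / c²`, so the
integrands are uniformly bounded on `(ε, z]`; the exponent is affine in `ε`, so they converge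
pointwise, and dominated convergence gives the limit. The limiting integrand takes values in
`(0, 1]` because `b₂ ≥ 0`, which gives finiteness and positivity.
-/

open MeasureTheory Real Set Filter
open scoped Topology

theorem exists_pos_mul_le_of_hasDerivWithinAt {f : ℝ → ℝ} {s z : ℝ} (hz : 0 ≤ z)
    (hf : ContinuousOn f (Icc 0 z)) (hpos : ∀ x ∈ Ioc 0 z, 0 < f x) (h0 : f 0 = 0)
    (hd : HasDerivWithinAt f s (Ici 0) 0) (hs : 0 < s) :
    ∃ c > 0, ∀ x ∈ Ioc 0 z, c * x ≤ f x := by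
  classical
  -- `f x / x`, extended by its limit `s` at `0`, is continuous and positive on `[0, z]`
  set g := Function.update (fun x => f x / x) 0 s
  have hg : ContinuousOn g (Icc 0 z) := by
    intro x hx
    rcases eq_or_ne x 0 with rfl | hx0
    · rw [continuousWithinAt_update_same]
      have := (hasDerivWithinAt_iff_tendsto_slope.1 hd).mono_left
        (nhdsWithin_mono (0 : ℝ) fun x (hx : x ∈ Icc 0 z \ {0}) => ⟨hx.1.1, hx.2⟩)
      simpa [slope_fun_def_field, h0] using this
    · rw [continuousWithinAt_update_of_ne hx0]
      exact (hf x hx).div continuousWithinAt_id hx0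
  have hgpos : ∀ x ∈ Icc 0 z, 0 < g x := by
    intro x hx
    rcases eq_or_ne x 0 with rfl | hx0
    · simpa [g] using hs
    · have hx' : 0 < x := hx.1.lt_of_ne' hx0
      simpa [g, hx0] using div_pos (hpos x ⟨hx', hx.2⟩) hx'
  obtain ⟨w, hw, hwmin⟩ := isCompact_Icc.exists_isMinOn ⟨0, left_mem_Icc.2 hz⟩ hg
  refine ⟨g w, hgpos w hw, fun x hx => ?_⟩
  calc g w * x ≤ g x * x := mul_le_mul_of_nonneg_right (hwmin (Ioc_subset_Icc_self hx)) hx.1.le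
    _ = f x := by simp [g, hx.1.ne']

theorem continuousOn_integral_left {g : ℝ → ℝ} {z : ℝ} (hg : ContinuousOn g (Ioi 0))
    (hz : 0 < z) : ContinuousOn (fun y => ∫ l in y..z, g l) (Ioi 0) := by
  intro y hy
  exact (intervalIntegral.integral_hasDerivAt_left
    ((hg.mono fun x hx => lt_of_lt_of_le (lt_min hy hz) hx.1).intervalIntegrable)
    (hg.stronglyMeasurableAtFilter isOpen_Ioi y hy)
    (hg.continuousAt (isOpen_Ioi.mem_nhds hy))).continuousAt.continuousWithinAt

theorem intervalIntegrable_exp_neg_integral {g : ℝ → ℝ} {z : ℝ} (hz : 0 < z)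
    (hg : ContinuousOn g (Ioi 0)) (hg_nonneg : ∀ x ∈ Ioc 0 z, 0 ≤ g x) :
    IntervalIntegrable (fun y => exp (-∫ l in y..z, g l)) volume 0 z := by
  rw [intervalIntegrable_iff_integrableOn_Ioc_of_le hz.le]
  refine Integrable.of_bound (((continuousOn_integral_left hg hz).neg.rexp.mono
    Ioc_subset_Ioi_self).aestronglyMeasurable measurableSet_Ioc) 1 ?_
  refine (ae_restrict_iff' measurableSet_Ioc).2 (ae_of_all _ fun y hy => ?_)
  rw [norm_of_nonneg (exp_pos _).le, exp_le_one_iff, neg_nonpos]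
  exact intervalIntegral.integral_nonneg hy.2 fun x hx =>
    hg_nonneg x ⟨hy.1.trans_le hx.1, hx.2⟩

theorem integral_inv_sq {y z : ℝ} (hy : 0 < y) (hz : 0 < z) :
    ∫ x in y..z, (x ^ 2)⁻¹ = y⁻¹ - z⁻¹ := by
  have h0 : (0 : ℝ) ∉ uIcc y z := fun h => (lt_min hy hz).not_ge h.1
  have := integral_zpow (a := y) (b := z) (n := -2) (Or.inr ⟨by norm_num, h0⟩)
  norm_num at this
  rw [this]
  ring

theorem integral_mul_sub_div_sq_le {f g σ : ℝ → ℝ} {c M ε y z : ℝ} (hc : 0 < c) (hM : 0 ≤ M)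
    (hε : 0 < ε) (hεy : ε ≤ y) (hyz : y ≤ z) (hf : ∀ x ∈ Icc y z, f x ≤ M)
    (hg : ∀ x ∈ Icc y z, 0 ≤ g x) (hσ : ∀ x ∈ Icc y z, c * x ≤ σ x)
    (hint : IntervalIntegrable (fun x => (ε * f x - g x) / σ x ^ 2) volume y z) :
    ∫ x in y..z, (ε * f x - g x) / σ x ^ 2 ≤ M / c ^ 2 := by
  have hy : 0 < y := hε.trans_le hεy
  have hz : 0 < z := hy.trans_le hyz
  have hpointwise : ∀ x ∈ Icc y z, (ε * f x - g x) / σ x ^ 2 ≤ ε * M / c ^ 2 * (x ^ 2)⁻¹ := by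
    intro x hx
    have hcx : 0 < c * x := mul_pos hc (hy.trans_le hx.1)
    calc (ε * f x - g x) / σ x ^ 2 ≤ ε * M / σ x ^ 2 := by
          gcongr
          nlinarith [hf x hx, hg x hx]
      _ ≤ ε * M / (c * x) ^ 2 := by
          gcongr
          exact hσ x hx
      _ = ε * M / c ^ 2 * (x ^ 2)⁻¹ := by ring
  have hεyz : ε * (y⁻¹ - z⁻¹) ≤ 1 := by
    have : ε * y⁻¹ ≤ 1 := by rw [← div_eq_mul_inv]; exact (div_le_one hy).2 hεy
    nlinarith [inv_pos.2 hz]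
  calc ∫ x in y..z, (ε * f x - g x) / σ x ^ 2
      ≤ ∫ x in y..z, ε * M / c ^ 2 * (x ^ 2)⁻¹ := by
        refine intervalIntegral.integral_mono_on hyz hint ?_ hpointwise
        refine ContinuousOn.intervalIntegrable fun x hx => ?_
        have hx0 : x ^ 2 ≠ 0 := pow_ne_zero 2 ((lt_min hy hz).trans_le hx.1).ne'
        exact (continuousAt_const.mul ((continuous_pow 2).continuousAt.inv₀ hx0)).continuousWithinAt
    _ = M / c ^ 2 * (ε * (y⁻¹ - z⁻¹)) := by
        rw [intervalIntegral.integral_const_mul, integral_inv_sq hy hz]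
        ring
    _ ≤ M / c ^ 2 := mul_le_of_le_one_right (by positivity) hεyz

theorem tendsto_integral_mul_sub_div {f g h : ℝ → ℝ} {a b : ℝ}
    (hf : IntervalIntegrable (fun x => f x / h x) volume a b)
    (hg : IntervalIntegrable (fun x => g x / h x) volume a b) :
    Tendsto (fun ε => ∫ x in a..b, (ε * f x - g x) / h x) (𝓝 0)
      (𝓝 (-∫ x in a..b, g x / h x)) := by
  have hlin : ∀ ε, ∫ x in a..b, (ε * f x - g x) / h x
      = ε * (∫ x in a..b, f x / h x) - ∫ x in a..b, g x / h x := by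
    intro ε
    rw [← intervalIntegral.integral_const_mul, ← intervalIntegral.integral_sub (hf.const_mul ε) hg]
    congr 1 with x
    ring
  simp only [hlin]
  exact ((continuous_id.mul continuous_const).sub continuous_const).tendsto' 0 _ (by simp)

theorem tendsto_intervalIntegral_nhdsGT_of_dominated {E : Type*} [NormedAddCommGroup E]
    [NormedSpace ℝ E] {F : ℝ → ℝ → E} {G : ℝ → E} {a b C : ℝ} (hab : a < b)
    (hF_meas : ∀ᶠ ε in 𝓝[>] a, AEStronglyMeasurable (F ε) (volume.restrict (Ioc ε b)))
    (h_bound : ∀ᶠ ε in 𝓝[>] a, ∀ y ∈ Ioc ε b, ‖F ε y‖ ≤ C)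
    (h_lim : ∀ y ∈ Ioc a b, Tendsto (fun ε => F ε y) (𝓝[>] a) (𝓝 (G y))) :
    Tendsto (fun ε => ∫ y in ε..b, F ε y) (𝓝[>] a) (𝓝 (∫ y in a..b, G y)) := by
  have hIoc : ∀ ε ∈ Ioo a b, Ioc a b ∩ Ioi ε = Ioc ε b := fun ε hε => by
    rw [Ioc_inter_Ioi, max_eq_right hε.1.le]
  have hrw : (fun ε => ∫ y in a..b, (Ioi ε).indicator (F ε) y)
      =ᶠ[𝓝[>] a] fun ε => ∫ y in ε..b, F ε y := by
    filter_upwards [Ioo_mem_nhdsGT hab] with ε hε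
    rw [intervalIntegral.integral_of_le hε.2.le, intervalIntegral.integral_of_le hab.le,
      setIntegral_indicator measurableSet_Ioi, hIoc ε hε]
  refine Tendsto.congr' hrw ?_
  refine intervalIntegral.tendsto_integral_filter_of_dominated_convergence (fun _ => C) ?_ ?_
    intervalIntegrable_const ?_
  · filter_upwards [hF_meas, Ioo_mem_nhdsGT hab] with ε hε hεb
    rw [uIoc_of_le hab.le, aestronglyMeasurable_indicator_iff measurableSet_Ioi,
      Measure.restrict_restrict measurableSet_Ioi, inter_comm, hIoc ε hεb]
    exact hε
  · filter_upwards [h_bound, Ioo_mem_nhdsGT hab] with ε hε hεb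
    refine ae_of_all _ fun y hy => ?_
    by_cases hyε : y ∈ Ioi ε
    · rw [indicator_of_mem hyε]
      rw [uIoc_of_le hab.le] at hy
      exact hε y ⟨hyε, hy.2⟩
    · rw [indicator_of_notMem hyε, norm_zero]
      exact (norm_nonneg _).trans (hε b ⟨hεb.2, le_rfl⟩)
  · refine ae_of_all _ fun y hy => ?_
    rw [uIoc_of_le hab.le] at hy
    refine (h_lim y hy).congr' ?_
    filter_upwards [Ioo_mem_nhdsGT hy.1] with ε hε
    rw [indicator_of_mem (show y ∈ Ioi ε from hε.2)]

theorem statement5_general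
    (b1 b2 σ : ℝ → ℝ)
    (hb1 : ContDiffOn ℝ 1 b1 (Ici 0))
    (hb1sup : ∃ M : ℝ, ∀ x ∈ Ici (0 : ℝ), b1 x ≤ M)
    (hb2 : ContDiffOn ℝ 2 b2 (Ici 0))
    (hb2nonneg : ∀ x ∈ Ici (0 : ℝ), 0 ≤ b2 x)
    (hσ : ContDiffOn ℝ 2 σ (Ici 0))
    (hσnonneg : ∀ x ∈ Ici (0 : ℝ), 0 ≤ σ x)
    (hσzero : ∀ x ∈ Ici (0 : ℝ), (σ x = 0 ↔ x = 0))
    (hσ' : 0 < derivWithin σ (Ici 0) 0)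
    (z : ℝ) (hz : 0 < z) :
    Tendsto
      (fun ε : ℝ => ∫ y in ε..z, Real.exp (∫ l in y..z, (ε * b1 l - b2 l) / σ l ^ 2))
      (𝓝[>] (0 : ℝ))
      (𝓝 (∫ y in (0 : ℝ)..z, Real.exp (-∫ l in y..z, b2 l / σ l ^ 2))) ∧
    IntervalIntegrable (fun y : ℝ => Real.exp (-∫ l in y..z, b2 l / σ l ^ 2)) volume 0 z ∧
    0 < ∫ y in (0 : ℝ)..z, Real.exp (-∫ l in y..z, b2 l / σ l ^ 2) := by
  obtain ⟨M, hM⟩ := hb1sup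
  have hσpos : ∀ x ∈ Ioi (0 : ℝ), 0 < σ x := fun x (hx : 0 < x) =>
    (hσnonneg x hx.le).lt_of_ne' (mt (hσzero x hx.le).1 hx.ne')
  obtain ⟨c, hc, hcσ⟩ := exists_pos_mul_le_of_hasDerivWithinAt hz.le
    (hσ.continuousOn.mono Icc_subset_Ici_self) (fun x hx => hσpos x hx.1)
    ((hσzero 0 self_mem_Ici).2 rfl)
    (hσ.differentiableOn (by norm_num) 0 self_mem_Ici).hasDerivWithinAt hσ'
  have hquot : ∀ f : ℝ → ℝ, ContinuousOn f (Ici 0) →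
      ContinuousOn (fun l => f l / σ l ^ 2) (Ioi 0) := fun f hf =>
    (hf.mono Ioi_subset_Ici_self).div ((hσ.continuousOn.mono Ioi_subset_Ici_self).pow 2)
      fun l hl => pow_ne_zero 2 (hσpos l hl).ne'
  have hii : ∀ f : ℝ → ℝ, ContinuousOn f (Ici 0) → ∀ y > 0,
      IntervalIntegrable (fun l => f l / σ l ^ 2) volume y z := fun f hf y hy =>
    ((hquot f hf).mono fun x hx => (lt_min hy hz).trans_le hx.1).intervalIntegrable
  have hnum : ∀ ε : ℝ, ContinuousOn (fun l => ε * b1 l - b2 l) (Ici 0) := fun ε =>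
    (continuousOn_const.mul hb1.continuousOn).sub hb2.continuousOn
  have hlimit := intervalIntegrable_exp_neg_integral hz (hquot b2 hb2.continuousOn)
    fun x hx => div_nonneg (hb2nonneg x hx.1.le) (sq_nonneg _)
  refine ⟨?_, hlimit, intervalIntegral.intervalIntegral_pos_of_pos_on hlimit
    (fun _ _ => exp_pos _) hz⟩
  refine tendsto_intervalIntegral_nhdsGT_of_dominated (C := exp (|M| / c ^ 2)) hz ?_ ?_ ?_
  · filter_upwards [self_mem_nhdsWithin] with ε (hε : 0 < ε)
    exact ((continuousOn_integral_left (hquot _ (hnum ε)) hz).rexp.mono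
      fun y hy => hε.trans hy.1).aestronglyMeasurable measurableSet_Ioc
  · filter_upwards [self_mem_nhdsWithin] with ε (hε : 0 < ε) y hy
    rw [norm_of_nonneg (exp_pos _).le, exp_le_exp]
    have hy0 : 0 ≤ y := hε.le.trans hy.1.le
    exact integral_mul_sub_div_sq_le hc (abs_nonneg M) hε hy.1.le hy.2
      (fun x hx => (hM x (hy0.trans hx.1)).trans (le_abs_self M))
      (fun x hx => hb2nonneg x (hy0.trans hx.1))
      (fun x hx => hcσ x ⟨hε.trans_le (hy.1.le.trans hx.1), hx.2⟩)
      (hii _ (hnum ε) y (hε.trans hy.1))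
  · intro y hy
    exact (continuous_exp.tendsto _).comp ((tendsto_integral_mul_sub_div
      (hii b1 hb1.continuousOn y hy.1) (hii b2 hb2.continuousOn y hy.1)).mono_left
      nhdsWithin_le_nhds)

/-- (Limit of the denominator scale integral, equation (4.11).) For every `z > 0`:
`lim_{ε→0⁺} ∫_ε^z exp(∫_y^z (ε·b₁(l) − b₂(l))/σ(l)² dl) dy
  = ∫_0^z exp(−∫_y^z b₂(l)/σ(l)² dl) dy`, and the right-hand side is finite and positive. -/
theorem statement5
    (b1 b2 σ : ℝ → ℝ)
    (hb1 : ContDiffOn ℝ 1 b1 (Ici 0))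
    (hb1inf : ∃ m > 0, ∀ x ∈ Ici (0 : ℝ), m ≤ b1 x)
    (hb1sup : ∃ M : ℝ, ∀ x ∈ Ici (0 : ℝ), b1 x ≤ M)
    (hb2 : ContDiffOn ℝ 2 b2 (Ici 0))
    (hb2nonneg : ∀ x ∈ Ici (0 : ℝ), 0 ≤ b2 x)
    (hb20 : b2 0 = 0)
    (hb2' : 0 < derivWithin b2 (Ici 0) 0)
    (hσ : ContDiffOn ℝ 2 σ (Ici 0))
    (hσnonneg : ∀ x ∈ Ici (0 : ℝ), 0 ≤ σ x)
    (hσzero : ∀ x ∈ Ici (0 : ℝ), (σ x = 0 ↔ x = 0))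
    (hσ' : 0 < derivWithin σ (Ici 0) 0)
    (z : ℝ) (hz : 0 < z) :
    Tendsto
      (fun ε : ℝ => ∫ y in ε..z, Real.exp (∫ l in y..z, (ε * b1 l - b2 l) / σ l ^ 2))
      (𝓝[>] (0 : ℝ))
      (𝓝 (∫ y in (0 : ℝ)..z, Real.exp (-∫ l in y..z, b2 l / σ l ^ 2))) ∧
    IntervalIntegrable (fun y : ℝ => Real.exp (-∫ l in y..z, b2 l / σ l ^ 2)) volume 0 z ∧
    0 < ∫ y in (0 : ℝ)..z, Real.exp (-∫ l in y..z, b2 l / σ l ^ 2) :=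
  statement5_general b1 b2 σ hb1 hb1sup hb2 hb2nonneg hσ hσnonneg hσzero hσ' z hz
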